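/- Necessary condition for double optimality: if (τ*_1, τ*_2) ∈ T_S × T_S is optimal for v(S) (i.e. v(S) = E[ψ(τ*_1,τ*_2)|F_S] a.s.), then with A = {τ*_1 ≤ τ*_2}: (1) τ*_1 ∧ τ*_2 is optimal for u(S); (2) τ*_2 is optimal for u_2(τ*_1) a.s. on A; (3) τ*_1 is optimal for u_1(τ*_2) a.s. on A^c; moreover A ⊂ {u_1(τ*_1 ∧ τ*_2) ≤ u_2(τ*_1 ∧ τ*_2)}. -/

import Mathlib

open MeasureTheory Filter ENNReal

variable {Ω : Type*}

/-- A stopping time of the filtration `ℱ` with values in `[0, T]` (an element of `T_0`). -/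
def IsStoppingTimeIn {m : MeasurableSpace Ω} (ℱ : Filtration ℝ m) (T : ℝ)
    (τ : Ω → ℝ) : Prop :=
  IsStoppingTime ℱ (fun ω => (τ ω : WithTop ℝ)) ∧ ∀ ω, τ ω ∈ Set.Icc (0 : ℝ) T

/-- `θ` belongs to `T_S`: a `[0,T]`-valued stopping time with `θ ≥ S` a.s. -/
def MemTS {m : MeasurableSpace Ω} (ℱ : Filtration ℝ m) (μ : Measure Ω) (T : ℝ)
    (S θ : Ω → ℝ) : Prop :=
  IsStoppingTimeIn ℱ T θ ∧ ∀ᵐ ω ∂μ, S ω ≤ θ ω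

/-- An admissible family of nonnegative random variables indexed by stopping times:
`φ(τ)` is `F_τ`-measurable and `φ(τ) = φ(τ')` a.s. on `{τ = τ'}`. -/
def Admissible {m : MeasurableSpace Ω} (ℱ : Filtration ℝ m) (μ : Measure Ω) (T : ℝ)
    (φ : (Ω → ℝ) → Ω → ℝ) : Prop :=
  (∀ τ (hτ : IsStoppingTimeIn ℱ T τ),
      Measurable[hτ.1.measurableSpace] (φ τ) ∧ ∀ ω, 0 ≤ φ τ ω) ∧
  (∀ τ τ', IsStoppingTimeIn ℱ T τ → IsStoppingTimeIn ℱ T τ' →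
      ∀ᵐ ω ∂μ, τ ω = τ' ω → φ τ ω = φ τ' ω)

/-- `v` is an essential supremum of the family of random variables `s`:
`v` dominates every member a.s., and is a.s. below any other a.s. upper bound. -/
def IsEssSupOf {m : MeasurableSpace Ω} (μ : Measure Ω) (s : Set (Ω → ℝ))
    (v : Ω → ℝ) : Prop :=
  (∀ f ∈ s, f ≤ᵐ[μ] v) ∧ ∀ g : Ω → ℝ, (∀ f ∈ s, f ≤ᵐ[μ] g) → v ≤ᵐ[μ] g

/-- The family `{E[φ(θ) | F_S] : θ ∈ T_S}`. -/
def valueSet {m : MeasurableSpace Ω} (ℱ : Filtration ℝ m) (μ : Measure Ω) (T : ℝ)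
    (φ : (Ω → ℝ) → Ω → ℝ) (S : Ω → ℝ) (hS : IsStoppingTime ℱ (fun ω => (S ω : WithTop ℝ))) : Set (Ω → ℝ) :=
  {f | ∃ θ, MemTS ℱ μ T S θ ∧ f = μ[φ θ | hS.measurableSpace]}

/-- `v` is the value function family of the reward family `φ`:
`v(S) = ess sup_{θ ∈ T_S} E[φ(θ) | F_S]`, chosen `F_S`-measurable. -/
def IsValueFam {m : MeasurableSpace Ω} (ℱ : Filtration ℝ m) (μ : Measure Ω) (T : ℝ)
    (φ v : (Ω → ℝ) → Ω → ℝ) : Prop :=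
  ∀ S (hS : IsStoppingTimeIn ℱ T S),
    Measurable[hS.1.measurableSpace] (v S) ∧
    IsEssSupOf μ (valueSet ℱ μ T φ S hS.1) (v S)

/-- Right continuity in expectation along stopping times. -/
def RCEFam {m : MeasurableSpace Ω} (ℱ : Filtration ℝ m) (μ : Measure Ω) (T : ℝ)
    (φ : (Ω → ℝ) → Ω → ℝ) : Prop :=
  ∀ θ (θn : ℕ → Ω → ℝ), IsStoppingTimeIn ℱ T θ →
    (∀ n, IsStoppingTimeIn ℱ T (θn n)) →
    (∀ᵐ ω ∂μ, Antitone (fun n => θn n ω) ∧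
      Tendsto (fun n => θn n ω) atTop (nhds (θ ω))) →
    Tendsto (fun n => ∫ ω, φ (θn n) ω ∂μ) atTop (nhds (∫ ω, φ θ ω ∂μ))

/-- Left continuity in expectation along stopping times. -/
def LCEFam {m : MeasurableSpace Ω} (ℱ : Filtration ℝ m) (μ : Measure Ω) (T : ℝ)
    (φ : (Ω → ℝ) → Ω → ℝ) : Prop :=
  ∀ θ (θn : ℕ → Ω → ℝ), IsStoppingTimeIn ℱ T θ →
    (∀ n, IsStoppingTimeIn ℱ T (θn n)) →
    (∀ᵐ ω ∂μ, Monotone (fun n => θn n ω) ∧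
      Tendsto (fun n => θn n ω) atTop (nhds (θ ω))) →
    Tendsto (fun n => ∫ ω, φ (θn n) ω ∂μ) atTop (nhds (∫ ω, φ θ ω ∂μ))

/-- The integrability condition `v(0) = sup_{θ ∈ T_0} E[φ(θ)] < ∞`. -/
def BddReward {m : MeasurableSpace Ω} (ℱ : Filtration ℝ m) (μ : Measure Ω) (T : ℝ)
    (φ : (Ω → ℝ) → Ω → ℝ) : Prop :=
  (⨆ θ : {θ : Ω → ℝ // IsStoppingTimeIn ℱ T θ},
      ∫⁻ ω, ENNReal.ofReal (φ θ.1 ω) ∂μ) < ⊤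

/-- A supermartingale system: an admissible family `h` with
`E[h(θ) | F_{θ'}] ≤ h(θ')` a.s. whenever `θ ≥ θ'` a.s. -/
def SupermartSys {m : MeasurableSpace Ω} (ℱ : Filtration ℝ m) (μ : Measure Ω) (T : ℝ)
    (h : (Ω → ℝ) → Ω → ℝ) : Prop :=
  Admissible ℱ μ T h ∧
  ∀ θ θ' (hθ : IsStoppingTimeIn ℱ T θ) (hθ' : IsStoppingTimeIn ℱ T θ'),
    (∀ᵐ ω ∂μ, θ' ω ≤ θ ω) →
    μ[h θ | hθ'.1.measurableSpace] ≤ᵐ[μ] h θ'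

/-- `F_0` contains only sets of probability `0` or `1`. -/
def TrivialF0 {m : MeasurableSpace Ω} (ℱ : Filtration ℝ m) (μ : Measure Ω) : Prop :=
  ∀ A : Set Ω, MeasurableSet[ℱ 0] A → μ A = 0 ∨ μ A = 1

/-- A biadmissible family: `ψ(τ,σ)` is `F_{τ∨σ}`-measurable, nonnegative, and
`ψ(τ,σ) = ψ(τ',σ')` a.s. on `{τ = τ'} ∩ {σ = σ'}`. -/
def Biadmissible {m : MeasurableSpace Ω} (ℱ : Filtration ℝ m) (μ : Measure Ω) (T : ℝ)
    (ψ : (Ω → ℝ) → (Ω → ℝ) → Ω → ℝ) : Prop :=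
  (∀ τ σ (hτ : IsStoppingTimeIn ℱ T τ) (hσ : IsStoppingTimeIn ℱ T σ),
      Measurable[(hτ.1.max hσ.1).measurableSpace] (ψ τ σ) ∧ ∀ ω, 0 ≤ ψ τ σ ω) ∧
  (∀ τ τ' σ σ', IsStoppingTimeIn ℱ T τ → IsStoppingTimeIn ℱ T τ' →
      IsStoppingTimeIn ℱ T σ → IsStoppingTimeIn ℱ T σ' →
      ∀ᵐ ω ∂μ, τ ω = τ' ω → σ ω = σ' ω → ψ τ σ ω = ψ τ' σ' ω)

/-- The family `{E[ψ(τ,θ) | F_θ] : τ ∈ T_θ}` whose essential supremum is `u₁(θ)`. -/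
def u1Set {m : MeasurableSpace Ω} (ℱ : Filtration ℝ m) (μ : Measure Ω) (T : ℝ)
    (ψ : (Ω → ℝ) → (Ω → ℝ) → Ω → ℝ) (θ : Ω → ℝ) (hθ : IsStoppingTime ℱ (fun ω => (θ ω : WithTop ℝ))) :
    Set (Ω → ℝ) :=
  {f | ∃ τ, MemTS ℱ μ T θ τ ∧ f = μ[ψ τ θ | hθ.measurableSpace]}

/-- The family `{E[ψ(θ,τ) | F_θ] : τ ∈ T_θ}` whose essential supremum is `u₂(θ)`. -/
def u2Set {m : MeasurableSpace Ω} (ℱ : Filtration ℝ m) (μ : Measure Ω) (T : ℝ)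
    (ψ : (Ω → ℝ) → (Ω → ℝ) → Ω → ℝ) (θ : Ω → ℝ) (hθ : IsStoppingTime ℱ (fun ω => (θ ω : WithTop ℝ))) :
    Set (Ω → ℝ) :=
  {f | ∃ τ, MemTS ℱ μ T θ τ ∧ f = μ[ψ θ τ | hθ.measurableSpace]}

/-- The family `{E[ψ(τ₁,τ₂) | F_S] : τ₁, τ₂ ∈ T_S}` whose essential supremum is `v(S)`. -/
def pairValueSet {m : MeasurableSpace Ω} (ℱ : Filtration ℝ m) (μ : Measure Ω) (T : ℝ)
    (ψ : (Ω → ℝ) → (Ω → ℝ) → Ω → ℝ) (S : Ω → ℝ) (hS : IsStoppingTime ℱ (fun ω => (S ω : WithTop ℝ))) :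
    Set (Ω → ℝ) :=
  {f | ∃ τ₁ τ₂, MemTS ℱ μ T S τ₁ ∧ MemTS ℱ μ T S τ₂ ∧
    f = μ[ψ τ₁ τ₂ | hS.measurableSpace]}

/-- `u₁` is the family `u₁(θ) = ess sup_{τ ∈ T_θ} E[ψ(τ,θ) | F_θ]`. -/
def IsU1Fam {m : MeasurableSpace Ω} (ℱ : Filtration ℝ m) (μ : Measure Ω) (T : ℝ)
    (ψ : (Ω → ℝ) → (Ω → ℝ) → Ω → ℝ) (u₁ : (Ω → ℝ) → Ω → ℝ) : Prop :=
  ∀ θ (hθ : IsStoppingTimeIn ℱ T θ),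
    Measurable[hθ.1.measurableSpace] (u₁ θ) ∧
    IsEssSupOf μ (u1Set ℱ μ T ψ θ hθ.1) (u₁ θ)

/-- `u₂` is the family `u₂(θ) = ess sup_{τ ∈ T_θ} E[ψ(θ,τ) | F_θ]`. -/
def IsU2Fam {m : MeasurableSpace Ω} (ℱ : Filtration ℝ m) (μ : Measure Ω) (T : ℝ)
    (ψ : (Ω → ℝ) → (Ω → ℝ) → Ω → ℝ) (u₂ : (Ω → ℝ) → Ω → ℝ) : Prop :=
  ∀ θ (hθ : IsStoppingTimeIn ℱ T θ),
    Measurable[hθ.1.measurableSpace] (u₂ θ) ∧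
    IsEssSupOf μ (u2Set ℱ μ T ψ θ hθ.1) (u₂ θ)

/-- `v` is the value function family of the double stopping problem:
`v(S) = ess sup_{τ₁,τ₂ ∈ T_S} E[ψ(τ₁,τ₂) | F_S]`. -/
def IsPairValueFam {m : MeasurableSpace Ω} (ℱ : Filtration ℝ m) (μ : Measure Ω) (T : ℝ)
    (ψ : (Ω → ℝ) → (Ω → ℝ) → Ω → ℝ) (v : (Ω → ℝ) → Ω → ℝ) : Prop :=
  ∀ S (hS : IsStoppingTimeIn ℱ T S),
    IsEssSupOf μ (pairValueSet ℱ μ T ψ S hS.1) (v S)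

/-- Uniform right continuity in expectation (URCE), together with the integrability
condition `sup_{θ,S ∈ T_0} E[ψ(θ,S)] < ∞`. -/
def URCEBi {m : MeasurableSpace Ω} (ℱ : Filtration ℝ m) (μ : Measure Ω) (T : ℝ)
    (ψ : (Ω → ℝ) → (Ω → ℝ) → Ω → ℝ) : Prop :=
  (⨆ p : {p : (Ω → ℝ) × (Ω → ℝ) //
      IsStoppingTimeIn ℱ T p.1 ∧ IsStoppingTimeIn ℱ T p.2},
      ∫⁻ ω, ENNReal.ofReal (ψ p.1.1 p.1.2 ω) ∂μ) < ⊤ ∧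
  ∀ S (Sn : ℕ → Ω → ℝ), IsStoppingTimeIn ℱ T S →
    (∀ n, IsStoppingTimeIn ℱ T (Sn n)) →
    (∀ᵐ ω ∂μ, Antitone (fun n => Sn n ω) ∧
      Tendsto (fun n => Sn n ω) atTop (nhds (S ω))) →
    Tendsto (fun n => ⨆ θ : {θ : Ω → ℝ // IsStoppingTimeIn ℱ T θ},
        |∫ ω, ψ θ.1 (Sn n) ω ∂μ - ∫ ω, ψ θ.1 S ω ∂μ|) atTop (nhds 0) ∧
    Tendsto (fun n => ⨆ θ : {θ : Ω → ℝ // IsStoppingTimeIn ℱ T θ},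
        |∫ ω, ψ (Sn n) θ.1 ω ∂μ - ∫ ω, ψ S θ.1 ω ∂μ|) atTop (nhds 0)

/-- Uniform left continuity in expectation (ULCE), together with the integrability
condition `sup_{θ,S ∈ T_0} E[ψ(θ,S)] < ∞`. -/
def ULCEBi {m : MeasurableSpace Ω} (ℱ : Filtration ℝ m) (μ : Measure Ω) (T : ℝ)
    (ψ : (Ω → ℝ) → (Ω → ℝ) → Ω → ℝ) : Prop :=
  (⨆ p : {p : (Ω → ℝ) × (Ω → ℝ) //
      IsStoppingTimeIn ℱ T p.1 ∧ IsStoppingTimeIn ℱ T p.2},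
      ∫⁻ ω, ENNReal.ofReal (ψ p.1.1 p.1.2 ω) ∂μ) < ⊤ ∧
  ∀ S (Sn : ℕ → Ω → ℝ), IsStoppingTimeIn ℱ T S →
    (∀ n, IsStoppingTimeIn ℱ T (Sn n)) →
    (∀ᵐ ω ∂μ, Monotone (fun n => Sn n ω) ∧
      Tendsto (fun n => Sn n ω) atTop (nhds (S ω))) →
    Tendsto (fun n => ⨆ θ : {θ : Ω → ℝ // IsStoppingTimeIn ℱ T θ},
        |∫ ω, ψ θ.1 (Sn n) ω ∂μ - ∫ ω, ψ θ.1 S ω ∂μ|) atTop (nhds 0) ∧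
    Tendsto (fun n => ⨆ θ : {θ : Ω → ℝ // IsStoppingTimeIn ℱ T θ},
        |∫ ω, ψ (Sn n) θ.1 ω ∂μ - ∫ ω, ψ S θ.1 ω ∂μ|) atTop (nhds 0)

/-!
Everything rests on pasting. If on some `B ∈ F_ν` with `ν ≤ τ₁*` and `ν ≤ τ₂*` on `B`, a pair of
stopping times after `ν` did better than `(τ₁*, τ₂*)` in conditional mean, then using it on `B`
and `(τ₁*, τ₂*)` off `B` would do better in mean. This bounds `u₁(ν)` and `u₂(ν)` by
`E[ψ(τ₁*, τ₂*) | F_ν]`, with equality where `(τ₁*, τ₂*)` is itself a competitor at `ν`. Taking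
`ν = τ₁*` on `{τ₁* ≤ τ₂*}` gives (2), symmetrically (3), and `ν = τ₁* ∧ τ₂*` gives
`φ(τ₁* ∧ τ₂*) = E[ψ(τ₁*, τ₂*) | F_{τ₁* ∧ τ₂*}]`, hence the inclusion. For (1), take `θ ∈ T_S`
and `C ∈ F_S`, and split `C` according to which of `u₁(θ)`, `u₂(θ)` is larger. Both are
increasing limits of their upward-directed families, so `∫_C φ(θ)` is approached by pairs pasted
at `θ` and is at most `∫_C ψ(τ₁*, τ₂*) = ∫_C φ(τ₁* ∧ τ₂*)`.
-/

namespace MeasureTheory.IsStoppingTime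

variable {ι : Type*} {m : MeasurableSpace Ω} {τ π : Ω → WithTop ι}

theorem piecewise_of_measurableSet [Preorder ι] {f : Filtration ι m} (hτ : IsStoppingTime f τ)
    (hπ : IsStoppingTime f π) {s : Set Ω} [DecidablePred (· ∈ s)]
    (hsτ : MeasurableSet[hτ.measurableSpace] s) (hsπ : MeasurableSet[hπ.measurableSpace] s) :
    IsStoppingTime f (s.piecewise τ π) := by
  intro i
  have hsplit : {ω | s.piecewise τ π ω ≤ i} = s ∩ {ω | τ ω ≤ i} ∪ sᶜ ∩ {ω | π ω ≤ i} := by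
    ext ω
    by_cases hω : ω ∈ s <;> simp [hω]
  rw [hsplit]
  exact (hsτ.2 i).union (hsπ.compl.2 i)

theorem measurableSet_of_subset_le [LinearOrder ι] [TopologicalSpace ι]
    [SecondCountableTopology ι] [OrderTopology ι] {f : Filtration ι m} (hτ : IsStoppingTime f τ)
    (hπ : IsStoppingTime f π) {s : Set Ω} (hs : MeasurableSet[hτ.measurableSpace] s)
    (hsub : s ⊆ {ω | τ ω ≤ π ω}) : MeasurableSet[hπ.measurableSpace] s := by
  have h := measurableSpace_mono (hτ.min hπ) hπ (fun ω => min_le_right (τ ω) (π ω)) _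
    (measurableSet_inter_le hτ hπ s hs)
  rwa [Set.inter_eq_left.2 hsub] at h

end MeasureTheory.IsStoppingTime

namespace IsStoppingTimeIn

variable {m : MeasurableSpace Ω} {ℱ : Filtration ℝ m} {T : ℝ} {τ σ : Ω → ℝ}

theorem sup (hτ : IsStoppingTimeIn ℱ T τ) (hσ : IsStoppingTimeIn ℱ T σ) :
    IsStoppingTimeIn ℱ T (τ ⊔ σ) :=
  ⟨by simpa only [Pi.sup_apply, WithTop.coe_max] using hτ.1.max hσ.1,
    fun ω => ⟨le_sup_of_le_left (hτ.2 ω).1, sup_le (hτ.2 ω).2 (hσ.2 ω).2⟩⟩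

theorem inf (hτ : IsStoppingTimeIn ℱ T τ) (hσ : IsStoppingTimeIn ℱ T σ) :
    IsStoppingTimeIn ℱ T (τ ⊓ σ) :=
  ⟨by simpa only [Pi.inf_apply, WithTop.coe_min] using hτ.1.min hσ.1,
    fun ω => ⟨le_inf (hτ.2 ω).1 (hσ.2 ω).1, inf_le_of_left_le (hτ.2 ω).2⟩⟩

theorem piecewise (hτ : IsStoppingTimeIn ℱ T τ) (hσ : IsStoppingTimeIn ℱ T σ) {s : Set Ω}
    [DecidablePred (· ∈ s)] (hsτ : MeasurableSet[hτ.1.measurableSpace] s)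
    (hsσ : MeasurableSet[hσ.1.measurableSpace] s) : IsStoppingTimeIn ℱ T (s.piecewise τ σ) := by
  refine ⟨?_, fun ω => ?_⟩
  · have h := hτ.1.piecewise_of_measurableSet hσ.1 hsτ hsσ
    convert h using 2 with ω
    by_cases hω : ω ∈ s <;> simp [hω]
  · by_cases hω : ω ∈ s
    · simpa [hω] using hτ.2 ω
    · simpa [hω] using hσ.2 ω

theorem measurableSpace_mono (hτ : IsStoppingTimeIn ℱ T τ) (hσ : IsStoppingTimeIn ℱ T σ)
    (hle : τ ≤ σ) : hτ.1.measurableSpace ≤ hσ.1.measurableSpace :=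
  hτ.1.measurableSpace_mono hσ.1 fun ω => WithTop.coe_le_coe.2 (hle ω)

theorem measurableSet_of_subset_le (hτ : IsStoppingTimeIn ℱ T τ) (hσ : IsStoppingTimeIn ℱ T σ)
    {s : Set Ω} (hs : MeasurableSet[hτ.1.measurableSpace] s) (hsub : s ⊆ {ω | τ ω ≤ σ ω}) :
    MeasurableSet[hσ.1.measurableSpace] s :=
  hτ.1.measurableSet_of_subset_le hσ.1 hs fun _ hω => WithTop.coe_le_coe.2 (hsub hω)

theorem measurableSet_le_left (hτ : IsStoppingTimeIn ℱ T τ) (hσ : IsStoppingTimeIn ℱ T σ) :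
    MeasurableSet[hτ.1.measurableSpace] {ω | τ ω ≤ σ ω} := by
  simpa only [WithTop.coe_le_coe] using hτ.1.measurableSet_le_stopping_time hσ.1

theorem measurableSet_le_right (hτ : IsStoppingTimeIn ℱ T τ) (hσ : IsStoppingTimeIn ℱ T σ) :
    MeasurableSet[hσ.1.measurableSpace] {ω | τ ω ≤ σ ω} :=
  hτ.measurableSet_of_subset_le hσ (hτ.measurableSet_le_left hσ) fun _ => id

theorem measurableSet_le_inf (hτ : IsStoppingTimeIn ℱ T τ) (hσ : IsStoppingTimeIn ℱ T σ) :
    MeasurableSet[(hτ.inf hσ).1.measurableSpace] {ω | τ ω ≤ σ ω} :=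
  hτ.measurableSet_of_subset_le (hτ.inf hσ) (hτ.measurableSet_le_left hσ)
    fun ω (h : τ ω ≤ σ ω) => show τ ω ≤ τ ω ⊓ σ ω from le_inf le_rfl h

theorem measurableSet_inter_le (hτ : IsStoppingTimeIn ℱ T τ) (hσ : IsStoppingTimeIn ℱ T σ)
    {C : Set Ω} (hC : MeasurableSet[hτ.1.measurableSpace] C) :
    MeasurableSet[hσ.1.measurableSpace] (C ∩ {ω | τ ω ≤ σ ω}) :=
  hτ.measurableSet_of_subset_le hσ (hC.inter (hτ.measurableSet_le_left hσ))
    Set.inter_subset_right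

end IsStoppingTimeIn

namespace MemTS

variable {m : MeasurableSpace Ω} {ℱ : Filtration ℝ m} {μ : Measure Ω} {T : ℝ} {S τ σ : Ω → ℝ}

theorem of_le (hτ : IsStoppingTimeIn ℱ T τ) (h : S ≤ τ) : MemTS ℱ μ T S τ :=
  ⟨hτ, .of_forall h⟩

theorem refl (hτ : IsStoppingTimeIn ℱ T τ) : MemTS ℱ μ T τ τ :=
  of_le hτ le_rfl

theorem trans (hσ : MemTS ℱ μ T S σ) (hτ : MemTS ℱ μ T σ τ) : MemTS ℱ μ T S τ :=
  ⟨hτ.1, by filter_upwards [hσ.2, hτ.2] with ω h₁ h₂ using h₁.trans h₂⟩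

theorem inf (hτ : MemTS ℱ μ T S τ) (hσ : MemTS ℱ μ T S σ) : MemTS ℱ μ T S (τ ⊓ σ) :=
  ⟨hτ.1.inf hσ.1, by filter_upwards [hτ.2, hσ.2] with ω h₁ h₂ using le_inf h₁ h₂⟩

theorem sup_right (hτ : MemTS ℱ μ T σ τ) (hσ : IsStoppingTimeIn ℱ T σ) :
    MemTS ℱ μ T σ (τ ⊔ σ) :=
  of_le (hτ.1.sup hσ) le_sup_right

theorem sup_ae_eq (hτ : MemTS ℱ μ T σ τ) : τ ⊔ σ =ᵐ[μ] τ := by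
  filter_upwards [hτ.2] with ω h using sup_eq_left.2 h

theorem piecewise (hτ : MemTS ℱ μ T S τ) (hσ : MemTS ℱ μ T S σ) {s : Set Ω}
    [DecidablePred (· ∈ s)] (hsτ : MeasurableSet[hτ.1.1.measurableSpace] s)
    (hsσ : MeasurableSet[hσ.1.1.measurableSpace] s) : MemTS ℱ μ T S (s.piecewise τ σ) := by
  refine ⟨hτ.1.piecewise hσ.1 hsτ hsσ, ?_⟩
  filter_upwards [hτ.2, hσ.2] with ω h₁ h₂
  by_cases hω : ω ∈ s <;> simpa [hω]

theorem inter_le_ae_eq (hτ : MemTS ℱ μ T S τ) (C : Set Ω) :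
    (C ∩ {ω | S ω ≤ τ ω} : Set Ω) =ᵐ[μ] C := by
  filter_upwards [hτ.2] with ω h
  exact propext ⟨And.left, fun hC => ⟨hC, h⟩⟩

end MemTS

section CondExp

variable {m m₀ : MeasurableSpace Ω} {μ : Measure Ω} {X Y : Ω → ℝ} {A : Set Ω}

theorem condExp_ae_eq_on (hm : m ≤ m₀) (hX : Integrable X μ) (hY : Integrable Y μ)
    (hA : MeasurableSet[m] A) (h : ∀ᵐ ω ∂μ, ω ∈ A → X ω = Y ω) :
    ∀ᵐ ω ∂μ, ω ∈ A → μ[X|m] ω = μ[Y|m] ω := by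
  have hXY : X - Y =ᵐ[μ.restrict A] 0 := by
    rw [EventuallyEq, ae_restrict_iff' (hm A hA)]
    filter_upwards [h] with ω h hω
    simp [h hω]
  have h0 := (ae_restrict_iff' (hm A hA)).1 (condExp_ae_eq_restrict_zero hA hXY)
  filter_upwards [h0, condExp_sub hX hY m] with ω h₀ hsub hω
  exact sub_eq_zero.1 (hsub.symm.trans (h₀ hω))

theorem condExp_le_on_of_setIntegral_le (hm : m ≤ m₀) [SigmaFinite (μ.trim hm)]
    (hX : Integrable X μ) (hY : Integrable Y μ) (hA : MeasurableSet[m] A)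
    (h : ∀ B, MeasurableSet[m] B → B ⊆ A → ∫ ω in B, X ω ∂μ ≤ ∫ ω in B, Y ω ∂μ) :
    ∀ᵐ ω ∂μ, ω ∈ A → μ[X|m] ω ≤ μ[Y|m] ω := by
  have hmX := (stronglyMeasurable_condExp (f := X) (μ := μ)).indicator hA
  have hmY := (stronglyMeasurable_condExp (f := Y) (μ := μ)).indicator hA
  have hle : A.indicator (μ[X|m]) ≤ᵐ[μ.trim hm] A.indicator (μ[Y|m]) := by
    refine ae_le_of_forall_setIntegral_le ((integrable_condExp.indicator (hm A hA)).trim hm hmX)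
      ((integrable_condExp.indicator (hm A hA)).trim hm hmY) fun B hB _ => ?_
    rw [← setIntegral_trim hm hmX hB, ← setIntegral_trim hm hmY hB,
      setIntegral_indicator (hm A hA), setIntegral_indicator (hm A hA),
      setIntegral_condExp hm hX (hB.inter hA), setIntegral_condExp hm hY (hB.inter hA)]
    exact h _ (hB.inter hA) Set.inter_subset_right
  filter_upwards [ae_le_of_ae_le_trim hle] with ω h hω
  simpa [hω] using h

theorem setIntegral_condExp_of_memTS {ℱ : Filtration ℝ m₀} {T : ℝ} [IsFiniteMeasure μ]
    {S θ : Ω → ℝ} (hS : IsStoppingTimeIn ℱ T S) (hθ : MemTS ℱ μ T S θ)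
    (hX : Integrable X μ) {C : Set Ω} (hC : MeasurableSet[hS.1.measurableSpace] C) :
    ∫ ω in C, μ[X|hθ.1.1.measurableSpace] ω ∂μ = ∫ ω in C, X ω ∂μ := by
  have hCθ := hθ.inter_le_ae_eq C
  rw [← setIntegral_congr_set hCθ, ← setIntegral_congr_set hCθ,
    setIntegral_condExp hθ.1.1.measurableSpace_le hX (hS.measurableSet_inter_le hθ.1 hC)]

end CondExp

theorem DirectedOn.exists_seq_rel {α : Type*} {r : α → α → Prop} {s : Set α}
    (hs : DirectedOn r s) {f : ℕ → α} (hf : ∀ n, f n ∈ s) :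
    ∃ F : ℕ → α, (∀ n, F n ∈ s) ∧ (∀ n, r (F n) (F (n + 1))) ∧ ∀ n, r (f n) (F n) := by
  choose up hup_mem hup_left hup_right using hs
  let F : ℕ → s := fun n => Nat.rec (motive := fun _ => s)
    ⟨up (f 0) (hf 0) (f 0) (hf 0), hup_mem _ _ _ _⟩
    (fun k x => ⟨up x x.2 (f (k + 1)) (hf (k + 1)), hup_mem _ _ _ _⟩) n
  refine ⟨fun n => F n, fun n => (F n).2, fun n => hup_left _ _ _ _, fun n => ?_⟩
  cases n with
  | zero => exact hup_left _ _ _ _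
  | succ k => exact hup_right _ _ _ _

theorem ae_le_of_integral_max_sub_nonpos {m₀ : MeasurableSpace Ω} {μ : Measure Ω}
    {f g : Ω → ℝ} (hf : Integrable f μ) (hg : Integrable g μ)
    (h : ∫ ω, max (f ω - g ω) 0 ∂μ ≤ 0) : f ≤ᵐ[μ] g := by
  have hzero := le_antisymm h (integral_nonneg fun ω => le_max_right _ _)
  rw [integral_eq_zero_iff_of_nonneg (f := fun ω => max (f ω - g ω) 0)
    (fun ω => le_max_right _ _) (hf.sub hg).pos_part] at hzero
  filter_upwards [hzero] with ω h
  simpa using h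

theorem DirectedOn.exists_maximizing_seq {m₀ : MeasurableSpace Ω} {μ : Measure Ω}
    {s : Set (Ω → ℝ)} (hdir : DirectedOn (· ≤ᵐ[μ] ·) s) (hne : s.Nonempty)
    (hint : ∀ f ∈ s, Integrable f μ) :
    ∃ F : ℕ → Ω → ℝ, (∀ n, F n ∈ s) ∧ (∀ n, F n ≤ᵐ[μ] F (n + 1)) ∧
      ∀ n : ℕ, sSup ((fun f => ∫ ω, f ω ∂μ) '' s) - 1 / (n + 1) < ∫ ω, F n ω ∂μ := by
  have hnear (n : ℕ) : ∃ f ∈ s, sSup ((fun f => ∫ ω, f ω ∂μ) '' s) - 1 / (n + 1) < ∫ ω, f ω ∂μ := by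
    obtain ⟨_, ⟨f, hf, rfl⟩, hlt⟩ :=
      exists_lt_of_lt_csSup (hne.image _) (sub_lt_self _ (Nat.one_div_pos_of_nat (α := ℝ)))
    exact ⟨f, hf, hlt⟩
  choose f hfs hf using hnear
  obtain ⟨F, hFs, hFsucc, hfF⟩ := hdir.exists_seq_rel hfs
  exact ⟨F, hFs, hFsucc, fun n =>
    (hf n).trans_le (integral_mono_ae (hint _ (hfs n)) (hint _ (hFs n)) (hfF n))⟩

namespace IsEssSupOf

variable {m₀ : MeasurableSpace Ω} {μ : Measure Ω} {s : Set (Ω → ℝ)} {v ζ : Ω → ℝ}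

theorem le_on (hv : IsEssSupOf μ s v) {A : Set Ω} {g : Ω → ℝ}
    (h : ∀ f ∈ s, ∀ᵐ ω ∂μ, ω ∈ A → f ω ≤ g ω) : ∀ᵐ ω ∂μ, ω ∈ A → v ω ≤ g ω := by
  classical
  have hbound : ∀ f ∈ s, f ≤ᵐ[μ] A.piecewise g v := fun f hf => by
    filter_upwards [h f hf, hv.1 f hf] with ω h₁ h₂
    by_cases hω : ω ∈ A <;> simp [hω, h₁, h₂]
  filter_upwards [hv.2 _ hbound] with ω h hω
  simpa [hω] using h

theorem exists_monotone_tendsto (hv : IsEssSupOf μ s v) (hne : s.Nonempty)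
    (hint : ∀ f ∈ s, Integrable f μ) (hζ : Integrable ζ μ) (hle : ∀ f ∈ s, f ≤ᵐ[μ] ζ)
    (hdir : DirectedOn (· ≤ᵐ[μ] ·) s) :
    ∃ F : ℕ → Ω → ℝ, (∀ n, F n ∈ s) ∧
      ∀ᵐ ω ∂μ, Monotone (fun n => F n ω) ∧ Tendsto (fun n => F n ω) atTop (nhds (v ω)) := by
  have hbdd : BddAbove ((fun f => ∫ ω, f ω ∂μ) '' s) := by
    refine ⟨∫ ω, ζ ω ∂μ, ?_⟩
    rintro _ ⟨f, hf, rfl⟩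
    exact integral_mono_ae (hint f hf) hζ (hle f hf)
  obtain ⟨F, hFs, hFsucc, hFint⟩ := hdir.exists_maximizing_seq hne hint
  have hmono : ∀ᵐ ω ∂μ, Monotone fun n => F n ω := by
    filter_upwards [ae_all_iff.2 hFsucc] with ω h using monotone_nat_of_le_succ h
  have hFζ : ∀ᵐ ω ∂μ, ∀ n, F n ω ≤ ζ ω := ae_all_iff.2 fun n => hle _ (hFs n)
  set g : Ω → ℝ := fun ω => ⨆ n, F n ω
  have hFg : ∀ᵐ ω ∂μ, Tendsto (fun n => F n ω) atTop (nhds (g ω)) := by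
    filter_upwards [hmono, hFζ] with ω h₁ h₂
    exact tendsto_atTop_ciSup h₁ ⟨ζ ω, by rintro _ ⟨n, rfl⟩; exact h₂ n⟩
  have hFle_g (n : ℕ) : F n ≤ᵐ[μ] g := by
    filter_upwards [hmono, hFg] with ω h₁ h₂ using h₁.ge_of_tendsto h₂ n
  have hg_int : Integrable g μ :=
    integrable_of_le_of_le (aestronglyMeasurable_of_tendsto_ae _
      (fun n => (hint _ (hFs n)).1) hFg) (hFle_g 0)
      (by filter_upwards [hFζ] with ω h using ciSup_le h) (hint _ (hFs 0)) hζ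
  have hg_ub : ∀ f ∈ s, f ≤ᵐ[μ] g := by
    intro f hf
    refine ae_le_of_integral_max_sub_nonpos (hint f hf) hg_int
      (ge_of_tendsto' tendsto_one_div_add_atTop_nhds_zero_nat fun n => ?_)
    -- a common majorant `k ∈ s` of `f` and `F n` has integral at most the supremum,
    -- which `F n` nearly attains
    obtain ⟨k, hk, hfk, hFk⟩ := hdir f hf (F n) (hFs n)
    have hexcess : ∫ ω, max (f ω - g ω) 0 ∂μ ≤ ∫ ω, (k ω - F n ω) ∂μ := by
      refine integral_mono_ae ((hint f hf).sub hg_int).pos_part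
        ((hint k hk).sub (hint _ (hFs n))) ?_
      filter_upwards [hfk, hFk, hFle_g n] with ω h₁ h₂ h₃
      exact max_le (by linarith) (by linarith)
    rw [integral_sub (hint k hk) (hint _ (hFs n))] at hexcess
    linarith [hFint n, le_csSup hbdd ⟨k, hk, rfl⟩]
  have hvg : v =ᵐ[μ] g := (hv.2 g hg_ub).antisymm <| by
    filter_upwards [ae_all_iff.2 fun n => hv.1 _ (hFs n)] with ω h using ciSup_le h
  refine ⟨F, hFs, ?_⟩
  filter_upwards [hmono, hFg, hvg] with ω h₁ h₂ h₃
  exact ⟨h₁, h₃ ▸ h₂⟩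

theorem integrable (hv : IsEssSupOf μ s v) (hne : s.Nonempty)
    (hint : ∀ f ∈ s, Integrable f μ) (hζ : Integrable ζ μ) (hle : ∀ f ∈ s, f ≤ᵐ[μ] ζ)
    (hdir : DirectedOn (· ≤ᵐ[μ] ·) s) : Integrable v μ := by
  obtain ⟨F, hFs, hF⟩ := hv.exists_monotone_tendsto hne hint hζ hle hdir
  exact integrable_of_le_of_le
    (aestronglyMeasurable_of_tendsto_ae _ (fun n => (hint _ (hFs n)).1) (hF.mono fun _ h => h.2))
    (hv.1 _ (hFs 0)) (hv.2 ζ hle) (hint _ (hFs 0)) hζ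

theorem setIntegral_le (hv : IsEssSupOf μ s v) (hne : s.Nonempty)
    (hint : ∀ f ∈ s, Integrable f μ) (hζ : Integrable ζ μ) (hle : ∀ f ∈ s, f ≤ᵐ[μ] ζ)
    (hdir : DirectedOn (· ≤ᵐ[μ] ·) s) {G : Set Ω} {c : ℝ}
    (h : ∀ f ∈ s, ∫ ω in G, f ω ∂μ ≤ c) : ∫ ω in G, v ω ∂μ ≤ c := by
  obtain ⟨F, hFs, hF⟩ := hv.exists_monotone_tendsto hne hint hζ hle hdir
  have hlim := integral_tendsto_of_tendsto_of_monotone (μ := μ.restrict G)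
    (fun n => (hint _ (hFs n)).restrict) (hv.integrable hne hint hζ hle hdir).restrict
    (ae_restrict_of_ae (hF.mono fun _ h => h.1)) (ae_restrict_of_ae (hF.mono fun _ h => h.2))
  exact le_of_tendsto' hlim fun n => h _ (hFs n)

end IsEssSupOf

/-- Unlike biadmissibility, these properties are symmetric in the two stopping times, so
statements about `u₁` follow from those about `u₂` applied to `Function.swap ψ`. -/
structure IsDominatedReward {m : MeasurableSpace Ω} (ℱ : Filtration ℝ m) (μ : Measure Ω)
    (T : ℝ) (ψ : (Ω → ℝ) → (Ω → ℝ) → Ω → ℝ) (Z : Ω → ℝ) : Prop where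
  integrable : ∀ τ σ, IsStoppingTimeIn ℱ T τ → IsStoppingTimeIn ℱ T σ → Integrable (ψ τ σ) μ
  integrable_bound : Integrable Z μ
  le_bound : ∀ τ σ, IsStoppingTimeIn ℱ T τ → IsStoppingTimeIn ℱ T σ → ψ τ σ ≤ᵐ[μ] Z
  congr : ∀ τ τ' σ σ', IsStoppingTimeIn ℱ T τ → IsStoppingTimeIn ℱ T τ' →
    IsStoppingTimeIn ℱ T σ → IsStoppingTimeIn ℱ T σ' →
    ∀ᵐ ω ∂μ, τ ω = τ' ω → σ ω = σ' ω → ψ τ σ ω = ψ τ' σ' ω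

section Reward

variable {m : MeasurableSpace Ω} {ℱ : Filtration ℝ m} {μ : Measure Ω} {T : ℝ}
  {ψ : (Ω → ℝ) → (Ω → ℝ) → Ω → ℝ} {Z : Ω → ℝ}

theorem Biadmissible.isDominatedReward (hψ : Biadmissible ℱ μ T ψ) (hZint : Integrable Z μ)
    (hZ : ∀ τ σ, IsStoppingTimeIn ℱ T τ → IsStoppingTimeIn ℱ T σ → ψ τ σ ≤ᵐ[μ] Z) :
    IsDominatedReward ℱ μ T ψ Z where
  integrable τ σ hτ hσ := by
    obtain ⟨hmeas, hnonneg⟩ := hψ.1 τ σ hτ hσ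
    refine hZint.mono'
      (hmeas.mono (hτ.1.max hσ.1).measurableSpace_le le_rfl).aestronglyMeasurable ?_
    filter_upwards [hZ τ σ hτ hσ] with ω h
    rwa [Real.norm_eq_abs, abs_of_nonneg (hnonneg ω)]
  integrable_bound := hZint
  le_bound := hZ
  congr := hψ.2

namespace IsDominatedReward

theorem swap (hψ : IsDominatedReward ℱ μ T ψ Z) :
    IsDominatedReward ℱ μ T (Function.swap ψ) Z where
  integrable τ σ hτ hσ := hψ.integrable σ τ hσ hτ
  integrable_bound := hψ.integrable_bound
  le_bound τ σ hτ hσ := hψ.le_bound σ τ hσ hτ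
  congr τ τ' σ σ' hτ hτ' hσ hσ' := by
    filter_upwards [hψ.congr σ σ' τ τ' hσ hσ' hτ hτ'] with ω h h₁ h₂ using h h₂ h₁

theorem congr_ae (hψ : IsDominatedReward ℱ μ T ψ Z) {τ τ' σ σ' : Ω → ℝ}
    (hτ : IsStoppingTimeIn ℱ T τ) (hτ' : IsStoppingTimeIn ℱ T τ')
    (hσ : IsStoppingTimeIn ℱ T σ) (hσ' : IsStoppingTimeIn ℱ T σ')
    (h₁ : τ =ᵐ[μ] τ') (h₂ : σ =ᵐ[μ] σ') : ψ τ σ =ᵐ[μ] ψ τ' σ' := by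
  filter_upwards [hψ.congr τ τ' σ σ' hτ hτ' hσ hσ', h₁, h₂] with ω h h₁ h₂ using h h₁ h₂

end IsDominatedReward

variable {θ : Ω → ℝ}

theorem integrable_of_mem_u2Set {hθ : IsStoppingTime ℱ fun ω => (θ ω : WithTop ℝ)}
    {f : Ω → ℝ} (hf : f ∈ u2Set ℱ μ T ψ θ hθ) : Integrable f μ := by
  obtain ⟨τ, -, rfl⟩ := hf
  exact integrable_condExp

theorem le_condExp_of_mem_u2Set (hψ : IsDominatedReward ℱ μ T ψ Z)
    (hθ : IsStoppingTimeIn ℱ T θ) {f : Ω → ℝ} (hf : f ∈ u2Set ℱ μ T ψ θ hθ.1) :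
    f ≤ᵐ[μ] μ[Z|hθ.1.measurableSpace] := by
  obtain ⟨τ, hτ, rfl⟩ := hf
  exact condExp_mono (hψ.integrable θ τ hθ hτ.1) hψ.integrable_bound (hψ.le_bound θ τ hθ hτ.1)

theorem u2Set_directedOn (hψ : IsDominatedReward ℱ μ T ψ Z) (hθ : IsStoppingTimeIn ℱ T θ) :
    DirectedOn (· ≤ᵐ[μ] ·) (u2Set ℱ μ T ψ θ hθ.1) := by
  classical
  rintro _ ⟨τ, hτ, rfl⟩ _ ⟨σ, hσ, rfl⟩
  set E := {ω | μ[ψ θ σ|hθ.1.measurableSpace] ω ≤ μ[ψ θ τ|hθ.1.measurableSpace] ω}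
  have hE : MeasurableSet[hθ.1.measurableSpace] E :=
    measurableSet_le stronglyMeasurable_condExp.measurable stronglyMeasurable_condExp.measurable
  have hτ' := hτ.sup_right hθ
  have hσ' := hσ.sup_right hθ
  -- `η` follows whichever of `τ`, `σ` has the larger conditional reward
  set η := E.piecewise (τ ⊔ θ) (σ ⊔ θ)
  have hη : MemTS ℱ μ T θ η :=
    hτ'.piecewise hσ' (hθ.measurableSpace_mono hτ'.1 le_sup_right E hE)
      (hθ.measurableSpace_mono hσ'.1 le_sup_right E hE)
  have hψη_on : ∀ᵐ ω ∂μ, ω ∈ E → ψ θ η ω = ψ θ τ ω := by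
    filter_upwards [hψ.congr θ θ η τ hθ hθ hη.1 hτ.1, hτ.sup_ae_eq] with ω h h' hω
    exact h rfl ((Set.piecewise_eq_of_mem _ _ _ hω).trans h')
  have hψη_off : ∀ᵐ ω ∂μ, ω ∈ Eᶜ → ψ θ η ω = ψ θ σ ω := by
    filter_upwards [hψ.congr θ θ η σ hθ hθ hη.1 hσ.1, hσ.sup_ae_eq] with ω h h' hω
    exact h rfl ((Set.piecewise_eq_of_notMem _ _ _ hω).trans h')
  have hmθ := hθ.1.measurableSpace_le
  have hon := condExp_ae_eq_on hmθ (hψ.integrable _ _ hθ hη.1) (hψ.integrable _ _ hθ hτ.1) hE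
    hψη_on
  have hoff := condExp_ae_eq_on hmθ (hψ.integrable _ _ hθ hη.1) (hψ.integrable _ _ hθ hσ.1)
    hE.compl hψη_off
  refine ⟨_, ⟨_, hη, rfl⟩, ?_, ?_⟩ <;> filter_upwards [hon, hoff] with ω h₁ h₂ <;>
    by_cases hω : ω ∈ E
  · exact (h₁ hω).ge
  · exact (h₂ hω).trans_ge (not_le.1 hω).le
  · exact (h₁ hω).trans_ge hω
  · exact (h₂ hω).ge

namespace IsU2Fam

variable {u₂ : (Ω → ℝ) → Ω → ℝ}

theorem integrable (hu₂ : IsU2Fam ℱ μ T ψ u₂) (hψ : IsDominatedReward ℱ μ T ψ Z)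
    (hθ : IsStoppingTimeIn ℱ T θ) : Integrable (u₂ θ) μ :=
  (hu₂ θ hθ).2.integrable ⟨_, θ, .refl hθ, rfl⟩ (fun _ => integrable_of_mem_u2Set)
    integrable_condExp (fun _ => le_condExp_of_mem_u2Set hψ hθ) (u2Set_directedOn hψ hθ)

theorem setIntegral_le [IsFiniteMeasure μ] (hu₂ : IsU2Fam ℱ μ T ψ u₂)
    (hψ : IsDominatedReward ℱ μ T ψ Z) (hθ : IsStoppingTimeIn ℱ T θ) {G : Set Ω}
    (hG : MeasurableSet[hθ.1.measurableSpace] G)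
    {c : ℝ} (h : ∀ τ, MemTS ℱ μ T θ τ → ∫ ω in G, ψ θ τ ω ∂μ ≤ c) :
    ∫ ω in G, u₂ θ ω ∂μ ≤ c := by
  refine (hu₂ θ hθ).2.setIntegral_le ⟨_, θ, .refl hθ, rfl⟩ (fun _ => integrable_of_mem_u2Set)
    integrable_condExp (fun _ => le_condExp_of_mem_u2Set hψ hθ) (u2Set_directedOn hψ hθ) ?_
  rintro _ ⟨τ, hτ, rfl⟩
  rw [setIntegral_condExp hθ.1.measurableSpace_le (hψ.integrable θ τ hθ hτ.1) hG]
  exact h τ hτ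

theorem condExp_le (hu₂ : IsU2Fam ℱ μ T ψ u₂) (hψ : IsDominatedReward ℱ μ T ψ Z)
    {ν τ₁ τ₂ : Ω → ℝ} (hν : IsStoppingTimeIn ℱ T ν) (hτ₁ : IsStoppingTimeIn ℱ T τ₁)
    (hτ₂ : IsStoppingTimeIn ℱ T τ₂) {A : Set Ω} (hA : MeasurableSet[hν.1.measurableSpace] A)
    (hA₁ : ∀ ω ∈ A, ν ω = τ₁ ω) (hA₂ : ∀ ω ∈ A, ν ω ≤ τ₂ ω) :
    ∀ᵐ ω ∂μ, ω ∈ A → μ[ψ τ₁ τ₂|hν.1.measurableSpace] ω ≤ u₂ ν ω := by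
  have hσ : MemTS ℱ μ T ν (τ₂ ⊔ ν) := .of_le (hτ₂.sup hν) le_sup_right
  have hψ_on : ∀ᵐ ω ∂μ, ω ∈ A → ψ τ₁ τ₂ ω = ψ ν (τ₂ ⊔ ν) ω := by
    filter_upwards [hψ.congr τ₁ ν τ₂ (τ₂ ⊔ ν) hτ₁ hν hτ₂ hσ.1] with ω h hω
    exact h (hA₁ ω hω).symm (sup_eq_left.2 (hA₂ ω hω)).symm
  filter_upwards [condExp_ae_eq_on hν.1.measurableSpace_le (hψ.integrable _ _ hτ₁ hτ₂)
    (hψ.integrable _ _ hν hσ.1) hA hψ_on, (hu₂ ν hν).2.1 _ ⟨_, hσ, rfl⟩] with ω h₁ h₂ hω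
  exact (h₁ hω).trans_le h₂

end IsU2Fam

namespace IsU1Fam

variable {u₁ : (Ω → ℝ) → Ω → ℝ}

theorem integrable (hu₁ : IsU1Fam ℱ μ T ψ u₁) (hψ : IsDominatedReward ℱ μ T ψ Z)
    (hθ : IsStoppingTimeIn ℱ T θ) : Integrable (u₁ θ) μ :=
  IsU2Fam.integrable (ψ := Function.swap ψ) hu₁ hψ.swap hθ

theorem setIntegral_le [IsFiniteMeasure μ] (hu₁ : IsU1Fam ℱ μ T ψ u₁)
    (hψ : IsDominatedReward ℱ μ T ψ Z) (hθ : IsStoppingTimeIn ℱ T θ) {G : Set Ω}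
    (hG : MeasurableSet[hθ.1.measurableSpace] G)
    {c : ℝ} (h : ∀ τ, MemTS ℱ μ T θ τ → ∫ ω in G, ψ τ θ ω ∂μ ≤ c) :
    ∫ ω in G, u₁ θ ω ∂μ ≤ c :=
  IsU2Fam.setIntegral_le (ψ := Function.swap ψ) hu₁ hψ.swap hθ hG h

end IsU1Fam

end Reward

def IsOptimalPair {m : MeasurableSpace Ω} (ℱ : Filtration ℝ m) (μ : Measure Ω) (T : ℝ)
    (ψ : (Ω → ℝ) → (Ω → ℝ) → Ω → ℝ) (S τ₁ τ₂ : Ω → ℝ) : Prop :=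
  ∀ ρ₁ ρ₂, MemTS ℱ μ T S ρ₁ → MemTS ℱ μ T S ρ₂ → ∫ ω, ψ ρ₁ ρ₂ ω ∂μ ≤ ∫ ω, ψ τ₁ τ₂ ω ∂μ

section OptimalPair

variable {m : MeasurableSpace Ω} {ℱ : Filtration ℝ m} {μ : Measure Ω}
  {T : ℝ} {ψ : (Ω → ℝ) → (Ω → ℝ) → Ω → ℝ} {Z : Ω → ℝ} {u₁ u₂ : (Ω → ℝ) → Ω → ℝ}
  {S τ₁ τ₂ ν : Ω → ℝ}

theorem IsPairValueFam.isOptimalPair [IsFiniteMeasure μ] {v : (Ω → ℝ) → Ω → ℝ}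
    (hv : IsPairValueFam ℱ μ T ψ v) (hS : IsStoppingTimeIn ℱ T S)
    (hopt : v S =ᵐ[μ] μ[ψ τ₁ τ₂|hS.1.measurableSpace]) : IsOptimalPair ℱ μ T ψ S τ₁ τ₂ := by
  intro ρ₁ ρ₂ hρ₁ hρ₂
  have hm := hS.1.measurableSpace_le
  rw [← integral_condExp hm (f := ψ ρ₁ ρ₂), ← integral_condExp hm (f := ψ τ₁ τ₂)]
  exact integral_mono_ae integrable_condExp integrable_condExp
    (((hv S hS).1 _ ⟨ρ₁, ρ₂, hρ₁, hρ₂, rfl⟩).trans hopt.le)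

namespace IsOptimalPair

theorem swap (h : IsOptimalPair ℱ μ T ψ S τ₁ τ₂) :
    IsOptimalPair ℱ μ T (Function.swap ψ) S τ₂ τ₁ :=
  fun ρ₁ ρ₂ hρ₁ hρ₂ => h ρ₂ ρ₁ hρ₂ hρ₁

theorem congr_ae (h : IsOptimalPair ℱ μ T ψ S τ₁ τ₂) (hψ : IsDominatedReward ℱ μ T ψ Z)
    {τ₁' τ₂' : Ω → ℝ} (hτ₁ : IsStoppingTimeIn ℱ T τ₁) (hτ₂ : IsStoppingTimeIn ℱ T τ₂)
    (hτ₁' : IsStoppingTimeIn ℱ T τ₁') (hτ₂' : IsStoppingTimeIn ℱ T τ₂')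
    (h₁ : τ₁' =ᵐ[μ] τ₁) (h₂ : τ₂' =ᵐ[μ] τ₂) : IsOptimalPair ℱ μ T ψ S τ₁' τ₂' :=
  fun ρ₁ ρ₂ hρ₁ hρ₂ =>
    (h ρ₁ ρ₂ hρ₁ hρ₂).trans_eq (integral_congr_ae (hψ.congr_ae hτ₁' hτ₁ hτ₂' hτ₂ h₁ h₂)).symm

/-- Pasting `(α₁, α₂)` on `B` with `(τ₁, τ₂)` off `B` gives a competitor. -/
theorem setIntegral_le (h : IsOptimalPair ℱ μ T ψ S τ₁ τ₂) (hψ : IsDominatedReward ℱ μ T ψ Z)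
    (hτ₁ : MemTS ℱ μ T S τ₁) (hτ₂ : MemTS ℱ μ T S τ₂) {α₁ α₂ : Ω → ℝ}
    (hα₁ : MemTS ℱ μ T S α₁) (hα₂ : MemTS ℱ μ T S α₂) {B : Set Ω}
    (hB₁ : MeasurableSet[hα₁.1.1.measurableSpace] B)
    (hB₁' : MeasurableSet[hτ₁.1.1.measurableSpace] B)
    (hB₂ : MeasurableSet[hα₂.1.1.measurableSpace] B)
    (hB₂' : MeasurableSet[hτ₂.1.1.measurableSpace] B) :
    ∫ ω in B, ψ α₁ α₂ ω ∂μ ≤ ∫ ω in B, ψ τ₁ τ₂ ω ∂μ := by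
  classical
  have hB : MeasurableSet B := hα₁.1.1.measurableSpace_le B hB₁
  have hρ₁ := hα₁.piecewise hτ₁ hB₁ hB₁'
  have hρ₂ := hα₂.piecewise hτ₂ hB₂ hB₂'
  have hon : ∀ᵐ ω ∂μ, ω ∈ B →
      ψ (B.piecewise α₁ τ₁) (B.piecewise α₂ τ₂) ω = ψ α₁ α₂ ω := by
    filter_upwards [hψ.congr _ _ _ _ hρ₁.1 hα₁.1 hρ₂.1 hα₂.1] with ω h hω
    exact h (Set.piecewise_eq_of_mem _ _ _ hω) (Set.piecewise_eq_of_mem _ _ _ hω)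
  have hoff : ∀ᵐ ω ∂μ, ω ∈ Bᶜ →
      ψ (B.piecewise α₁ τ₁) (B.piecewise α₂ τ₂) ω = ψ τ₁ τ₂ ω := by
    filter_upwards [hψ.congr _ _ _ _ hρ₁.1 hτ₁.1 hρ₂.1 hτ₂.1] with ω h hω
    exact h (Set.piecewise_eq_of_notMem _ _ _ hω) (Set.piecewise_eq_of_notMem _ _ _ hω)
  have hle := h _ _ hρ₁ hρ₂
  rw [← integral_add_compl hB (hψ.integrable _ _ hρ₁.1 hρ₂.1),
    ← integral_add_compl hB (hψ.integrable _ _ hτ₁.1 hτ₂.1), setIntegral_congr_ae hB hon,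
    setIntegral_congr_ae hB.compl hoff] at hle
  linarith

theorem u2_le_condExp [IsFiniteMeasure μ] (h : IsOptimalPair ℱ μ T ψ S τ₁ τ₂)
    (hψ : IsDominatedReward ℱ μ T ψ Z) (hu₂ : IsU2Fam ℱ μ T ψ u₂) (hτ₁ : MemTS ℱ μ T S τ₁)
    (hτ₂ : MemTS ℱ μ T S τ₂) (hν : MemTS ℱ μ T S ν) {A : Set Ω}
    (hA : MeasurableSet[hν.1.1.measurableSpace] A) (hA₁ : ∀ ω ∈ A, ν ω ≤ τ₁ ω)
    (hA₂ : ∀ ω ∈ A, ν ω ≤ τ₂ ω) :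
    ∀ᵐ ω ∂μ, ω ∈ A → u₂ ν ω ≤ μ[ψ τ₁ τ₂|hν.1.1.measurableSpace] ω := by
  refine (hu₂ ν hν.1).2.le_on ?_
  rintro _ ⟨τ, hτ, rfl⟩
  have hα := hτ.sup_right hν.1
  have hτα := condExp_congr_ae (m := hν.1.1.measurableSpace)
    (hψ.congr_ae hν.1 hν.1 hτ.1 hα.1 .rfl hτ.sup_ae_eq.symm)
  have hle := condExp_le_on_of_setIntegral_le hν.1.1.measurableSpace_le
    (hψ.integrable _ _ hν.1 hα.1) (hψ.integrable _ _ hτ₁.1 hτ₂.1) hA fun B hB hBA =>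
      h.setIntegral_le hψ hτ₁ hτ₂ hν (hν.trans hα) hB
        (hν.1.measurableSet_of_subset_le hτ₁.1 hB fun ω hω => hA₁ ω (hBA hω))
        (hν.1.measurableSpace_mono hα.1 le_sup_right B hB)
        (hν.1.measurableSet_of_subset_le hτ₂.1 hB fun ω hω => hA₂ ω (hBA hω))
  filter_upwards [hτα, hle] with ω h₁ h₂ hω
  exact h₁.trans_le (h₂ hω)

theorem u1_le_condExp [IsFiniteMeasure μ] (h : IsOptimalPair ℱ μ T ψ S τ₁ τ₂)
    (hψ : IsDominatedReward ℱ μ T ψ Z) (hu₁ : IsU1Fam ℱ μ T ψ u₁) (hτ₁ : MemTS ℱ μ T S τ₁)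
    (hτ₂ : MemTS ℱ μ T S τ₂) (hν : MemTS ℱ μ T S ν) {A : Set Ω}
    (hA : MeasurableSet[hν.1.1.measurableSpace] A) (hA₁ : ∀ ω ∈ A, ν ω ≤ τ₁ ω)
    (hA₂ : ∀ ω ∈ A, ν ω ≤ τ₂ ω) :
    ∀ᵐ ω ∂μ, ω ∈ A → u₁ ν ω ≤ μ[ψ τ₁ τ₂|hν.1.1.measurableSpace] ω :=
  h.swap.u2_le_condExp hψ.swap hu₁ hτ₂ hτ₁ hν hA hA₂ hA₁

theorem u2_eq_condExp [IsFiniteMeasure μ] (h : IsOptimalPair ℱ μ T ψ S τ₁ τ₂)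
    (hψ : IsDominatedReward ℱ μ T ψ Z) (hu₂ : IsU2Fam ℱ μ T ψ u₂) (hτ₁ : MemTS ℱ μ T S τ₁)
    (hτ₂ : MemTS ℱ μ T S τ₂) (hν : MemTS ℱ μ T S ν) {A : Set Ω}
    (hA : MeasurableSet[hν.1.1.measurableSpace] A) (hA₁ : ∀ ω ∈ A, ν ω = τ₁ ω)
    (hA₂ : ∀ ω ∈ A, ν ω ≤ τ₂ ω) :
    ∀ᵐ ω ∂μ, ω ∈ A → u₂ ν ω = μ[ψ τ₁ τ₂|hν.1.1.measurableSpace] ω := by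
  filter_upwards [h.u2_le_condExp hψ hu₂ hτ₁ hτ₂ hν hA (fun ω hω => (hA₁ ω hω).le) hA₂,
    hu₂.condExp_le hψ hν.1 hτ₁.1 hτ₂.1 hA hA₁ hA₂] with ω h₁ h₂ hω
  exact le_antisymm (h₁ hω) (h₂ hω)

theorem u1_eq_condExp [IsFiniteMeasure μ] (h : IsOptimalPair ℱ μ T ψ S τ₁ τ₂)
    (hψ : IsDominatedReward ℱ μ T ψ Z) (hu₁ : IsU1Fam ℱ μ T ψ u₁) (hτ₁ : MemTS ℱ μ T S τ₁)
    (hτ₂ : MemTS ℱ μ T S τ₂) (hν : MemTS ℱ μ T S ν) {A : Set Ω}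
    (hA : MeasurableSet[hν.1.1.measurableSpace] A) (hA₁ : ∀ ω ∈ A, ν ω ≤ τ₁ ω)
    (hA₂ : ∀ ω ∈ A, ν ω = τ₂ ω) :
    ∀ᵐ ω ∂μ, ω ∈ A → u₁ ν ω = μ[ψ τ₁ τ₂|hν.1.1.measurableSpace] ω :=
  h.swap.u2_eq_condExp hψ.swap hu₁ hτ₂ hτ₁ hν hA hA₂ hA₁

theorem sup_inf_eq_condExp [IsFiniteMeasure μ] (h : IsOptimalPair ℱ μ T ψ S τ₁ τ₂)
    (hψ : IsDominatedReward ℱ μ T ψ Z) (hu₁ : IsU1Fam ℱ μ T ψ u₁) (hu₂ : IsU2Fam ℱ μ T ψ u₂)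
    (hτ₁ : MemTS ℱ μ T S τ₁) (hτ₂ : MemTS ℱ μ T S τ₂) :
    u₁ (τ₁ ⊓ τ₂) ⊔ u₂ (τ₁ ⊓ τ₂) =ᵐ[μ] μ[ψ τ₁ τ₂|(hτ₁.inf hτ₂).1.1.measurableSpace] := by
  have hθ := hτ₁.inf hτ₂
  have hA := hτ₁.1.measurableSet_le_inf hτ₂.1
  filter_upwards [h.u1_le_condExp hψ hu₁ hτ₁ hτ₂ hθ .univ (fun ω _ => inf_le_left)
      (fun ω _ => inf_le_right),
    h.u2_le_condExp hψ hu₂ hτ₁ hτ₂ hθ .univ (fun ω _ => inf_le_left) (fun ω _ => inf_le_right),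
    h.u1_eq_condExp hψ hu₁ hτ₁ hτ₂ hθ hA.compl (fun ω _ => inf_le_left)
      (fun ω hω => inf_eq_right.2 (le_of_not_ge hω)),
    h.u2_eq_condExp hψ hu₂ hτ₁ hτ₂ hθ hA (fun ω hω => inf_eq_left.2 hω)
      (fun ω _ => inf_le_right)] with ω h₁ h₂ e₁ e₂
  refine le_antisymm (sup_le (h₁ trivial) (h₂ trivial)) ?_
  by_cases hω : τ₁ ω ≤ τ₂ ω
  · exact (e₂ hω).symm.le.trans le_sup_right
  · exact (e₁ hω).symm.le.trans le_sup_left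

theorem setIntegral_add_setIntegral_le (h : IsOptimalPair ℱ μ T ψ S τ₁ τ₂)
    (hψ : IsDominatedReward ℱ μ T ψ Z) (hS : IsStoppingTimeIn ℱ T S) (hτ₁ : MemTS ℱ μ T S τ₁)
    (hτ₂ : MemTS ℱ μ T S τ₂) {θ τ σ : Ω → ℝ} (hθ : MemTS ℱ μ T S θ) (hτ : MemTS ℱ μ T θ τ)
    (hσ : MemTS ℱ μ T θ σ) {U G : Set Ω} (hUS : MeasurableSet[hS.1.measurableSpace] U)
    (hUθ : MeasurableSet[hθ.1.1.measurableSpace] U) (hG : MeasurableSet[hθ.1.1.measurableSpace] G) :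
    ∫ ω in U ∩ G, ψ τ θ ω ∂μ + ∫ ω in U \ G, ψ θ σ ω ∂μ ≤ ∫ ω in U, ψ τ₁ τ₂ ω ∂μ := by
  classical
  have hτ' := hτ.1.sup hθ.1
  have hσ' := hσ.1.sup hθ.1
  have hθα₁ : θ ≤ G.piecewise (τ ⊔ θ) θ :=
    Set.le_piecewise (fun _ _ => le_sup_right) fun _ _ => le_rfl
  have hθα₂ : θ ≤ G.piecewise θ (σ ⊔ θ) :=
    Set.le_piecewise (fun _ _ => le_rfl) fun _ _ => le_sup_right
  have hα₁ : MemTS ℱ μ T θ (G.piecewise (τ ⊔ θ) θ) :=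
    .of_le (hτ'.piecewise hθ.1 (hθ.1.measurableSpace_mono hτ' le_sup_right G hG) hG) hθα₁
  have hα₂ : MemTS ℱ μ T θ (G.piecewise θ (σ ⊔ θ)) :=
    .of_le (hθ.1.piecewise hσ' hG (hθ.1.measurableSpace_mono hσ' le_sup_right G hG)) hθα₂
  -- pasting along `U ∈ F_S` needs `U ∈ F_{τᵢ}`, so `τᵢ` is replaced by `τᵢ ⊔ S = τᵢ` a.s.
  have hτ₁' := hτ₁.1.sup hS
  have hτ₂' := hτ₂.1.sup hS
  have hτS : ψ (τ₁ ⊔ S) (τ₂ ⊔ S) =ᵐ[μ] ψ τ₁ τ₂ :=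
    hψ.congr_ae hτ₁' hτ₁.1 hτ₂' hτ₂.1 hτ₁.sup_ae_eq hτ₂.sup_ae_eq
  have hle := (h.congr_ae hψ hτ₁.1 hτ₂.1 hτ₁' hτ₂' hτ₁.sup_ae_eq hτ₂.sup_ae_eq).setIntegral_le
    hψ (.of_le hτ₁' le_sup_right) (.of_le hτ₂' le_sup_right) (hθ.trans hα₁) (hθ.trans hα₂)
    (hθ.1.measurableSpace_mono hα₁.1 hθα₁ U hUθ) (hS.measurableSpace_mono hτ₁' le_sup_right U hUS)
    (hθ.1.measurableSpace_mono hα₂.1 hθα₂ U hUθ) (hS.measurableSpace_mono hτ₂' le_sup_right U hUS)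
  have hmθ := hθ.1.1.measurableSpace_le
  have hon : ∀ᵐ ω ∂μ, ω ∈ U ∩ G →
      ψ (G.piecewise (τ ⊔ θ) θ) (G.piecewise θ (σ ⊔ θ)) ω = ψ τ θ ω := by
    filter_upwards [hψ.congr _ τ _ θ hα₁.1 hτ.1 hα₂.1 hθ.1, hτ.sup_ae_eq] with ω h h' hω
    exact h ((Set.piecewise_eq_of_mem _ _ _ hω.2).trans h') (Set.piecewise_eq_of_mem _ _ _ hω.2)
  have hoff : ∀ᵐ ω ∂μ, ω ∈ U \ G →
      ψ (G.piecewise (τ ⊔ θ) θ) (G.piecewise θ (σ ⊔ θ)) ω = ψ θ σ ω := by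
    filter_upwards [hψ.congr _ θ _ σ hα₁.1 hθ.1 hα₂.1 hσ.1, hσ.sup_ae_eq] with ω h h' hω
    exact h (Set.piecewise_eq_of_notMem _ _ _ hω.2)
      ((Set.piecewise_eq_of_notMem _ _ _ hω.2).trans h')
  rwa [integral_congr_ae (ae_restrict_of_ae hτS),
    ← integral_inter_add_sdiff (hmθ G hG) (hψ.integrable _ _ hα₁.1 hα₂.1).integrableOn,
    setIntegral_congr_ae ((hmθ U hUθ).inter (hmθ G hG)) hon,
    setIntegral_congr_ae ((hmθ U hUθ).diff (hmθ G hG)) hoff] at hle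

theorem setIntegral_sup_le [IsFiniteMeasure μ] (h : IsOptimalPair ℱ μ T ψ S τ₁ τ₂)
    (hψ : IsDominatedReward ℱ μ T ψ Z) (hu₁ : IsU1Fam ℱ μ T ψ u₁) (hu₂ : IsU2Fam ℱ μ T ψ u₂)
    (hS : IsStoppingTimeIn ℱ T S) (hτ₁ : MemTS ℱ μ T S τ₁) (hτ₂ : MemTS ℱ μ T S τ₂)
    {θ : Ω → ℝ} (hθ : MemTS ℱ μ T S θ) {C : Set Ω} (hC : MeasurableSet[hS.1.measurableSpace] C) :
    ∫ ω in C, (u₁ θ ⊔ u₂ θ) ω ∂μ ≤ ∫ ω in C, ψ τ₁ τ₂ ω ∂μ := by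
  set U := C ∩ {ω | S ω ≤ θ ω}
  have hUS : MeasurableSet[hS.1.measurableSpace] U := hC.inter (hS.measurableSet_le_left hθ.1)
  have hUθ : MeasurableSet[hθ.1.1.measurableSpace] U := hS.measurableSet_inter_le hθ.1 hC
  set E := {ω | u₂ θ ω ≤ u₁ θ ω}
  have hE : MeasurableSet[hθ.1.1.measurableSpace] E :=
    measurableSet_le (hu₂ θ hθ.1).1 (hu₁ θ hθ.1).1
  have hmθ := hθ.1.1.measurableSpace_le
  have hsplit : ∫ ω in C, (u₁ θ ⊔ u₂ θ) ω ∂μ =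
      ∫ ω in U ∩ E, u₁ θ ω ∂μ + ∫ ω in U \ E, u₂ θ ω ∂μ := by
    rw [← setIntegral_congr_set (hθ.inter_le_ae_eq C), ← integral_inter_add_sdiff (hmθ E hE)
      ((hu₁.integrable hψ hθ.1).sup (hu₂.integrable hψ hθ.1)).integrableOn]
    congr 1
    · exact setIntegral_congr_fun ((hmθ U hUθ).inter (hmθ E hE)) fun ω hω => sup_eq_left.2 hω.2
    · exact setIntegral_congr_fun ((hmθ U hUθ).diff (hmθ E hE))
        fun ω hω => sup_eq_right.2 (le_of_not_ge hω.2)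
  rw [hsplit, ← setIntegral_congr_set (hθ.inter_le_ae_eq C)]
  have hbound₁ (σ : Ω → ℝ) (hσ : MemTS ℱ μ T θ σ) :
      ∫ ω in U ∩ E, u₁ θ ω ∂μ ≤ ∫ ω in U, ψ τ₁ τ₂ ω ∂μ - ∫ ω in U \ E, ψ θ σ ω ∂μ :=
    hu₁.setIntegral_le hψ hθ.1 (hUθ.inter hE) fun τ hτ => by
      linarith [h.setIntegral_add_setIntegral_le hψ hS hτ₁ hτ₂ hθ hτ hσ hUS hUθ hE]
  have hbound₂ : ∫ ω in U \ E, u₂ θ ω ∂μ ≤ ∫ ω in U, ψ τ₁ τ₂ ω ∂μ - ∫ ω in U ∩ E, u₁ θ ω ∂μ :=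
    hu₂.setIntegral_le hψ hθ.1 (hUθ.diff hE) fun σ hσ => by linarith [hbound₁ σ hσ]
  linarith

theorem ae_eq_condExp_sup_inf [IsFiniteMeasure μ] (h : IsOptimalPair ℱ μ T ψ S τ₁ τ₂)
    (hψ : IsDominatedReward ℱ μ T ψ Z) (hu₁ : IsU1Fam ℱ μ T ψ u₁) (hu₂ : IsU2Fam ℱ μ T ψ u₂)
    (hS : IsStoppingTimeIn ℱ T S) (hτ₁ : MemTS ℱ μ T S τ₁) (hτ₂ : MemTS ℱ μ T S τ₂)
    {w : Ω → ℝ} (hw : IsEssSupOf μ (valueSet ℱ μ T (fun θ => u₁ θ ⊔ u₂ θ) S hS.1) w) :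
    w =ᵐ[μ] μ[u₁ (τ₁ ⊓ τ₂) ⊔ u₂ (τ₁ ⊓ τ₂)|hS.1.measurableSpace] := by
  have hθ := hτ₁.inf hτ₂
  have hmS := hS.1.measurableSpace_le
  have hφ_int (θ : Ω → ℝ) (hθ : IsStoppingTimeIn ℱ T θ) : Integrable (u₁ θ ⊔ u₂ θ) μ :=
    (hu₁.integrable hψ hθ).sup (hu₂.integrable hψ hθ)
  have hφθ (C : Set Ω) (hC : MeasurableSet[hS.1.measurableSpace] C) :
      ∫ ω in C, (u₁ (τ₁ ⊓ τ₂) ⊔ u₂ (τ₁ ⊓ τ₂)) ω ∂μ = ∫ ω in C, ψ τ₁ τ₂ ω ∂μ := by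
    rw [integral_congr_ae (ae_restrict_of_ae (h.sup_inf_eq_condExp hψ hu₁ hu₂ hτ₁ hτ₂)),
      setIntegral_condExp_of_memTS hS hθ (hψ.integrable _ _ hτ₁.1 hτ₂.1) hC]
  refine (hw.2 _ ?_).antisymm (hw.1 _ ⟨_, hθ, rfl⟩)
  rintro _ ⟨θ, hθS, rfl⟩
  filter_upwards [condExp_le_on_of_setIntegral_le hmS (hφ_int θ hθS.1) (hφ_int _ hθ.1)
    .univ fun C hC _ => (h.setIntegral_sup_le hψ hu₁ hu₂ hS hτ₁ hτ₂ hθS hC).trans_eq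
      (hφθ C hC).symm] with ω h using h trivial

end IsOptimalPair

end OptimalPair

theorem double_stopping_necessary_condition_general {m : MeasurableSpace Ω}
    (ℱ : Filtration ℝ m) (μ : Measure Ω) [IsProbabilityMeasure μ]
    (T : ℝ)
    (ψ : (Ω → ℝ) → (Ω → ℝ) → Ω → ℝ) (hψ : Biadmissible ℱ μ T ψ)
    -- `E[ess sup_{θ,S} ψ(θ,S)] < ∞`
    (Z : Ω → ℝ) (hZint : Integrable Z μ)
    (hZ : ∀ τ σ, IsStoppingTimeIn ℱ T τ → IsStoppingTimeIn ℱ T σ → ψ τ σ ≤ᵐ[μ] Z)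
    (u₁ u₂ : (Ω → ℝ) → Ω → ℝ)
    (hu₁ : IsU1Fam ℱ μ T ψ u₁) (hu₂ : IsU2Fam ℱ μ T ψ u₂)
    (v u : (Ω → ℝ) → Ω → ℝ)
    (hv : IsPairValueFam ℱ μ T ψ v)
    (hu : ∀ S (hS : IsStoppingTimeIn ℱ T S),
      IsEssSupOf μ (valueSet ℱ μ T (fun θ => u₁ θ ⊔ u₂ θ) S hS.1) (u S))
    (S : Ω → ℝ) (hS : IsStoppingTimeIn ℱ T S)
    (τ₁ τ₂ : Ω → ℝ) (hτ₁ : MemTS ℱ μ T S τ₁) (hτ₂ : MemTS ℱ μ T S τ₂)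
    (hopt : v S =ᵐ[μ] μ[ψ τ₁ τ₂ | hS.1.measurableSpace]) :
    -- (1) `τ₁ ∧ τ₂` is optimal for `u(S)`
    (u S =ᵐ[μ] μ[u₁ (τ₁ ⊓ τ₂) ⊔ u₂ (τ₁ ⊓ τ₂) | hS.1.measurableSpace]) ∧
    -- (2) `τ₂` is optimal for `u₂(τ₁)` a.s. on `A = {τ₁ ≤ τ₂}`
    (∀ᵐ ω ∂μ, τ₁ ω ≤ τ₂ ω →
      u₂ τ₁ ω = (μ[ψ τ₁ τ₂ | hτ₁.1.1.measurableSpace]) ω) ∧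
    -- (3) `τ₁` is optimal for `u₁(τ₂)` a.s. on `Aᶜ`
    (∀ᵐ ω ∂μ, ¬ τ₁ ω ≤ τ₂ ω →
      u₁ τ₂ ω = (μ[ψ τ₁ τ₂ | hτ₂.1.1.measurableSpace]) ω) ∧
    -- `A ⊆ B`
    (∀ᵐ ω ∂μ, τ₁ ω ≤ τ₂ ω → u₁ (τ₁ ⊓ τ₂) ω ≤ u₂ (τ₁ ⊓ τ₂) ω) := by
  have hdom := hψ.isDominatedReward hZint hZ
  have hmax := hv.isOptimalPair hS hopt
  have hθ := hτ₁.inf hτ₂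
  refine ⟨hmax.ae_eq_condExp_sup_inf hdom hu₁ hu₂ hS hτ₁ hτ₂ (hu S hS), ?_, ?_, ?_⟩
  · exact hmax.u2_eq_condExp hdom hu₂ hτ₁ hτ₂ hτ₁ (hτ₁.1.measurableSet_le_left hτ₂.1)
      (fun _ _ => rfl) fun _ h => h
  · exact hmax.u1_eq_condExp hdom hu₁ hτ₁ hτ₂ hτ₂ (hτ₁.1.measurableSet_le_right hτ₂.1).compl
      (fun _ h => (not_le.1 h).le) fun _ _ => rfl
  · filter_upwards [hmax.sup_inf_eq_condExp hdom hu₁ hu₂ hτ₁ hτ₂,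
      hmax.u2_eq_condExp hdom hu₂ hτ₁ hτ₂ hθ (hτ₁.1.measurableSet_le_inf hτ₂.1)
        (fun _ h => inf_eq_left.2 h) fun _ _ => inf_le_right] with ω hφ hu₂θ hA
    rw [hu₂θ hA, ← hφ]
    exact le_sup_left

/-- **Proposition 2.2 (Necessary condition of optimality).** If `(τ₁*, τ₂*)` is optimal
for `v(S)` then, with `A = {τ₁* ≤ τ₂*}`: (1) `τ₁* ∧ τ₂*` is optimal for `u(S)`;
(2) `τ₂*` is optimal for `u₂(τ₁*)` a.s. on `A`; (3) `τ₁*` is optimal for `u₁(τ₂*)`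
a.s. on `Aᶜ`; moreover `A ⊆ {u₁(τ₁* ∧ τ₂*) ≤ u₂(τ₁* ∧ τ₂*)}` a.s. -/
theorem double_stopping_necessary_condition {m : MeasurableSpace Ω}
    (ℱ : Filtration ℝ m) (μ : Measure Ω) [IsProbabilityMeasure μ]
    (T : ℝ) (hT : 0 < T)
    (ψ : (Ω → ℝ) → (Ω → ℝ) → Ω → ℝ) (hψ : Biadmissible ℱ μ T ψ)
    -- `E[ess sup_{θ,S} ψ(θ,S)] < ∞`
    (Z : Ω → ℝ) (hZint : Integrable Z μ)
    (hZ : ∀ τ σ, IsStoppingTimeIn ℱ T τ → IsStoppingTimeIn ℱ T σ → ψ τ σ ≤ᵐ[μ] Z)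
    (u₁ u₂ : (Ω → ℝ) → Ω → ℝ)
    (hu₁ : IsU1Fam ℱ μ T ψ u₁) (hu₂ : IsU2Fam ℱ μ T ψ u₂)
    (v u : (Ω → ℝ) → Ω → ℝ)
    (hv : IsPairValueFam ℱ μ T ψ v)
    (hu : ∀ S (hS : IsStoppingTimeIn ℱ T S),
      IsEssSupOf μ (valueSet ℱ μ T (fun θ => u₁ θ ⊔ u₂ θ) S hS.1) (u S))
    (S : Ω → ℝ) (hS : IsStoppingTimeIn ℱ T S)
    (τ₁ τ₂ : Ω → ℝ) (hτ₁ : MemTS ℱ μ T S τ₁) (hτ₂ : MemTS ℱ μ T S τ₂)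
    (hopt : v S =ᵐ[μ] μ[ψ τ₁ τ₂ | hS.1.measurableSpace]) :
    -- (1) `τ₁ ∧ τ₂` is optimal for `u(S)`
    (u S =ᵐ[μ] μ[u₁ (τ₁ ⊓ τ₂) ⊔ u₂ (τ₁ ⊓ τ₂) | hS.1.measurableSpace]) ∧
    -- (2) `τ₂` is optimal for `u₂(τ₁)` a.s. on `A = {τ₁ ≤ τ₂}`
    (∀ᵐ ω ∂μ, τ₁ ω ≤ τ₂ ω →
      u₂ τ₁ ω = (μ[ψ τ₁ τ₂ | hτ₁.1.1.measurableSpace]) ω) ∧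
    -- (3) `τ₁` is optimal for `u₁(τ₂)` a.s. on `Aᶜ`
    (∀ᵐ ω ∂μ, ¬ τ₁ ω ≤ τ₂ ω →
      u₁ τ₂ ω = (μ[ψ τ₁ τ₂ | hτ₂.1.1.measurableSpace]) ω) ∧
    -- `A ⊆ B`
    (∀ᵐ ω ∂μ, τ₁ ω ≤ τ₂ ω → u₁ (τ₁ ⊓ τ₂) ω ≤ u₂ (τ₁ ⊓ τ₂) ω) :=
  double_stopping_necessary_condition_general ℱ μ T ψ hψ Z hZint hZ u₁ u₂ hu₁ hu₂ v u hv hu S hS τ₁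
    τ₂ hτ₁ hτ₂ hopt
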